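/- arXiv:1711.03091 — 2 statements merged into one kernel-verified Lean document; each statement's English description precedes it below -/
import Mathlib

section
/- Suppose for all t, W_{t+1}/W_t ≤ exp((e^{Hλ}-1)·P_t/H) and W_{T+1}/W_1 ≥ (w/R)^d · exp(λ(OPT - Hk - LTw)), where P(A) = Σ_t P_t ≤ HT and 0 < Hλ ≤ 1. Then OPT - P(A) ≤ H²Tλ + (d·ln(R/w))/λ + Hk + LTw. -/
/-! Taking logarithms, the lower potential bound and the telescoped upper bounds give
`d ln(w/R) + λ(OPT - Hk - LTw) ≤ (e^{Hλ} - 1)/H · P(A)`. Since `e^z ≤ 1 + z + z²` for `|z| ≤ 1`,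
the rate `(e^{Hλ} - 1)/H` is at most `λ + Hλ²`, and `P(A) ≤ HT` bounds the second-order
term by `H²Tλ²`; dividing by `λ` gives the regret bound. -/

open Finset Real

lemma log_div_le_sum_of_div_le_exp {W a : ℕ → ℝ} {T : ℕ} (hW : ∀ t, 0 < W t)
    (h : ∀ t ∈ Icc 1 T, W (t + 1) / W t ≤ exp (a t)) :
    log (W (T + 1) / W 1) ≤ ∑ t ∈ Icc 1 T, a t := by
  have htel : ∑ t ∈ Icc 1 T, (log (W (t + 1)) - log (W t)) = log (W (T + 1)) - log (W 1) := by
    rw [← Ico_add_one_right_eq_Icc, sum_Ico_sub (fun t ↦ log (W t)) (by omega)]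
  rw [log_div (hW _).ne' (hW _).ne', ← htel]
  refine sum_le_sum fun t ht ↦ ?_
  rw [← log_div (hW _).ne' (hW _).ne', log_le_iff_le_exp (div_pos (hW _) (hW _))]
  exact h t ht

lemma exp_mul_sub_one_div_le {H lam : ℝ} (hH : 0 < H) (hHlam : |H * lam| ≤ 1) :
    (exp (H * lam) - 1) / H ≤ lam + H * lam ^ 2 := by
  have hquad : exp (H * lam) - 1 - H * lam ≤ (H * lam) ^ 2 :=
    (le_abs_self _).trans (abs_exp_sub_one_sub_id_le hHlam)
  rw [div_le_iff₀ hH]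
  nlinarith

/-- Combining the upper and lower potential bounds of the exponentially weighted
forecaster yields the regret bound
OPT - P(A) ≤ H²Tλ + d·ln(R/w)/λ + Hk + LTw. -/
theorem ewf_regret_bound
    (T d : ℕ) (H lam w R OPT L k : ℝ) (W P : ℕ → ℝ)
    (hWpos : ∀ t, 0 < W t)
    (hPnn : ∀ t, 0 ≤ P t)
    (hH : 0 < H) (hlam : 0 < lam) (hHlam : H * lam ≤ 1)
    (hw : 0 < w) (hwR : w ≤ R)
    (hupper : ∀ t ∈ Finset.Icc 1 T,
      W (t + 1) / W t ≤ Real.exp ((Real.exp (H * lam) - 1) * P t / H))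
    (hlower : (w / R) ^ d * Real.exp (lam * (OPT - H * k - L * T * w)) ≤
      W (T + 1) / W 1)
    (hPA : ∑ t ∈ Finset.Icc 1 T, P t ≤ H * T) :
    OPT - ∑ t ∈ Finset.Icc 1 T, P t ≤
      H ^ 2 * T * lam + (d * Real.log (R / w)) / lam + H * k + L * T * w := by
  set PA := ∑ t ∈ Icc 1 T, P t
  have hwR_pos : 0 < w / R := div_pos hw (hw.trans_le hwR)
  have hpotential : d * log (w / R) + lam * (OPT - H * k - L * T * w) ≤
      (exp (H * lam) - 1) / H * PA := by
    have hlog := log_le_log (by positivity) hlower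
    rw [log_mul (by positivity) (exp_pos _).ne', log_pow, log_exp] at hlog
    rw [mul_sum]
    refine hlog.trans ((log_div_le_sum_of_div_le_exp hWpos hupper).trans_eq ?_)
    exact sum_congr rfl fun t _ ↦ by ring
  have hrate := exp_mul_sub_one_div_le hH
    (abs_le.2 ⟨by linarith [mul_pos hH hlam], hHlam⟩)
  have hPA_nonneg : 0 ≤ PA := sum_nonneg fun t _ ↦ hPnn t
  have hgain : (exp (H * lam) - 1) / H * PA ≤ lam * PA + H ^ 2 * T * lam ^ 2 := by
    calc (exp (H * lam) - 1) / H * PA ≤ (lam + H * lam ^ 2) * PA := by gcongr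
      _ ≤ lam * PA + H * lam ^ 2 * (H * T) := by
        have := mul_le_mul_of_nonneg_left hPA (by positivity : 0 ≤ H * lam ^ 2)
        linarith
      _ = lam * PA + H ^ 2 * T * lam ^ 2 := by ring
  have hlog_inv : log (w / R) = -log (R / w) := by rw [← inv_div, log_inv]
  have hscaled : lam * (OPT - PA - (H ^ 2 * T * lam + H * k + L * T * w)) ≤ d * log (R / w) := by
    rw [hlog_inv] at hpotential
    linarith
  rw [← le_div_iff₀' hlam] at hscaled
  linarith
end

section
/- Let u₁, ..., u_N : C → [0,H] be piecewise L-Lipschitz functions with B(ρ*, w) ⊂ C ⊂ B(0,R), (w,k)-dispersed at a maximizer ρ*. Let μ be the distribution on C with density proportional to exp((ε N)/(2H) · (1/N)Σᵢ uᵢ(ρ)). Then for any ζ > 0, with probability at least 1-ζ over ρ̂ ∼ μ, (1/N)Σᵢ uᵢ(ρ̂) ≥ (1/N)Σᵢ uᵢ(ρ*) - (2H)/(Nε)·(d·ln(R/w) + ln(1/ζ)) - Lw - Hk/N. -/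
/-!
Write `a` for the normalised utility `(1/N) Σᵢ uᵢ` and `c = εN/(2H)`. On `B(ρ*, w)` the density
`exp (c a)` is at least `exp (c (a ρ* - Lw - Hk/N))`: by dispersion at most `k` of the `uᵢ` have a
partition splitting the ball, each of them loses at most `H` there, and every other `uᵢ` is
`L`-Lipschitz on the whole ball. On the bad set, which lies in `B(0, R)`, the density is at most
`exp (c (a ρ* - Δ))` with `Δ` the full gap. Comparing the two integrals bounds the probability of
the bad set by `(R/w)^d · exp (-(d log (R/w) + log (1/ζ))) = ζ`: the factor `c` turns the first
summand of `Δ` into exactly the logarithm of the volume ratio of the two balls, plus `log (1/ζ)`.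
-/

open MeasureTheory Metric

/-- A partition `P` splits a set `B` if `B` intersects at least two members of `P`. -/
def SplitBy {α : Type*} (P : Set (Set α)) (B : Set α) : Prop :=
  ∃ A ∈ P, ∃ A' ∈ P, A ≠ A' ∧ (B ∩ A).Nonempty ∧ (B ∩ A').Nonempty

open Real
open scoped NNReal

theorem LipschitzOnWith.dist_le_of_not_splitBy {X Y : Type*} [PseudoMetricSpace X]
    [PseudoMetricSpace Y] {P : Set (Set X)} {B : Set X} {f : X → Y} {K : ℝ≥0}
    (hlip : ∀ A ∈ P, LipschitzOnWith K f A) (hB : B ⊆ ⋃₀ P) (hsplit : ¬SplitBy P B)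
    {x y : X} (hx : x ∈ B) (hy : y ∈ B) : dist (f x) (f y) ≤ K * dist x y := by
  obtain ⟨A, hA, hxA⟩ := hB hx
  obtain ⟨A', hA', hyA'⟩ := hB hy
  obtain rfl : A = A' := by
    by_contra hne
    exact hsplit ⟨A, hA, A', hA', hne, ⟨x, hx, hxA⟩, ⟨y, hy, hyA'⟩⟩
  exact (hlip A hA).dist_le_mul x hxA y hyA'

theorem sum_le_sum_add_of_ncard_splitBy_le {X ι : Type*} [PseudoMetricSpace X] [Fintype ι]
    {u : ι → X → ℝ} {P : ι → Set (Set X)} {C : Set X} {x y : X} {r H k : ℝ} {K : ℝ≥0}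
    (hH : 0 ≤ H) (hrange : ∀ i, ∀ z ∈ C, u i z ∈ Set.Icc 0 H) (hpart : ∀ i, ⋃₀ P i = C)
    (hlip : ∀ i, ∀ A ∈ P i, LipschitzOnWith K (u i) A) (hball : closedBall x r ⊆ C)
    (hk : ({i | SplitBy (P i) (closedBall x r)}.ncard : ℝ) ≤ k) (hy : y ∈ closedBall x r) :
    ∑ i, u i x ≤ ∑ i, u i y + (k * H + Fintype.card ι * (K * r)) := by
  classical
  set T := {i | SplitBy (P i) (closedBall x r)}
  have hx : x ∈ closedBall x r := mem_closedBall_self (dist_nonneg.trans hy)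
  have hterm : ∀ i, u i x - u i y ≤ (if i ∈ T then H else 0) + K * r := by
    intro i
    have hKr : 0 ≤ (K : ℝ) * r := mul_nonneg K.2 (dist_nonneg.trans hy)
    split_ifs with hi
    · linarith [(hrange i x (hball hx)).2, (hrange i y (hball hy)).1]
    · have hdist := (LipschitzOnWith.dist_le_of_not_splitBy (hlip i) (hpart i ▸ hball) hi hx hy)
      rw [dist_comm x, Real.dist_eq] at hdist
      calc u i x - u i y ≤ K * dist y x := (le_abs_self _).trans hdist
        _ ≤ K * r := mul_le_mul_of_nonneg_left (mem_closedBall.mp hy) K.2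
        _ = 0 + K * r := (zero_add _).symm
  have hcard : ∑ i, (if i ∈ T then H else 0) ≤ k * H := by
    rw [Finset.sum_ite, Finset.sum_const_zero, add_zero, Finset.sum_const, nsmul_eq_mul]
    have hfilter : (Finset.univ.filter (· ∈ T)).card = T.ncard := by
      rw [Set.ncard_eq_toFinset_card']; congr 1; ext; simp
    rw [hfilter]
    exact mul_le_mul_of_nonneg_right hk hH
  have hsum := Finset.sum_le_sum fun i (_ : i ∈ Finset.univ) => hterm i
  rw [Finset.sum_sub_distrib, Finset.sum_add_distrib, Finset.sum_const, nsmul_eq_mul,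
    Finset.card_univ] at hsum
  linarith

theorem measureReal_div_measureReal_closedBall_le {E : Type*} [NormedAddCommGroup E]
    [NormedSpace ℝ E] [MeasurableSpace E] [BorelSpace E] [FiniteDimensional ℝ E]
    (μ : Measure E) [μ.IsAddHaarMeasure] {S : Set E} {x y : E} {r R : ℝ} (hr : 0 < r)
    (hR : 0 ≤ R) (hS : S ⊆ closedBall y R) :
    μ.real S / μ.real (closedBall x r) ≤ (R / r) ^ Module.finrank ℝ E := by
  have hunit : 0 < μ.real (ball (0 : E) 1) :=
    ENNReal.toReal_pos (measure_ball_pos μ 0 one_pos).ne' measure_ball_lt_top.ne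
  have hS' : μ.real S ≤ μ.real (closedBall y R) :=
    measureReal_mono hS measure_closedBall_lt_top.ne
  rw [Measure.addHaar_real_closedBall μ y hR] at hS'
  rw [Measure.addHaar_real_closedBall μ x hr.le, div_le_iff₀ (by positivity), div_pow,
    div_mul_eq_mul_div, mul_div_assoc, mul_div_cancel_left₀ _ (by positivity)]
  linarith

theorem integrableOn_exp_mul_of_le {α : Type*} [MeasurableSpace α] {μ : Measure α}
    {g : α → ℝ} {C : Set α} {c M : ℝ} (hc : 0 ≤ c) (hg : Measurable g) (hC : MeasurableSet C)
    (hμC : μ C ≠ ⊤) (hgC : ∀ x ∈ C, g x ≤ M) :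
    IntegrableOn (fun x => exp (c * g x)) C μ := by
  refine Measure.integrableOn_of_bounded (M := exp (c * M)) hμC
    (hg.const_mul c).exp.aestronglyMeasurable ?_
  filter_upwards [ae_restrict_mem hC] with x hx
  rw [Real.norm_of_nonneg (exp_pos _).le]
  exact exp_le_exp.mpr (mul_le_mul_of_nonneg_left (hgC x hx) hc)

theorem setIntegral_exp_div_setIntegral_exp_le {α : Type*} [MeasurableSpace α]
    {μ : Measure α} {g : α → ℝ} {S B C : Set α} {c a b : ℝ} (hc : 0 ≤ c)
    (hint : IntegrableOn (fun x => exp (c * g x)) C μ) (hB : MeasurableSet B) (hBC : B ⊆ C)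
    (hμB : 0 < μ B) (hμB' : μ B ≠ ⊤) (hμS : μ S ≠ ⊤)
    (hgS : ∀ x ∈ S, g x ≤ b) (hgB : ∀ x ∈ B, a ≤ g x) :
    (∫ x in S, exp (c * g x) ∂μ) / ∫ x in C, exp (c * g x) ∂μ ≤
      μ.real S / μ.real B * exp (c * (b - a)) := by
  have hnum : ∫ x in S, exp (c * g x) ∂μ ≤ exp (c * b) * μ.real S := by
    refine (Real.le_norm_self _).trans
      (norm_setIntegral_le_of_norm_le_const hμS.lt_top fun x hx => ?_)
    rw [Real.norm_of_nonneg (exp_pos _).le]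
    exact exp_le_exp.mpr (mul_le_mul_of_nonneg_left (hgS x hx) hc)
  have hden : μ.real B * exp (c * a) ≤ ∫ x in C, exp (c * g x) ∂μ := by
    refine (setIntegral_ge_of_const_le hB hμB' (fun x hx => ?_) (hint.mono_set hBC)).trans
      (setIntegral_mono_set hint (.of_forall fun x => (exp_pos _).le) hBC.eventuallyLE)
    exact exp_le_exp.mpr (mul_le_mul_of_nonneg_left (hgB x hx) hc)
  have hμB_real : 0 < μ.real B := ENNReal.toReal_pos hμB.ne' hμB'
  rw [div_le_iff₀ ((by positivity : (0:ℝ) < μ.real B * exp (c * a)).trans_le hden)]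
  calc ∫ x in S, exp (c * g x) ∂μ ≤ exp (c * b) * μ.real S := hnum
    _ = μ.real S / μ.real B * exp (c * (b - a)) * (μ.real B * exp (c * a)) := by
      rw [mul_sub, exp_sub]; field_simp
    _ ≤ _ := by gcongr

theorem pow_mul_exp_neg_mul_log_add_log_le {x ζ : ℝ} (hx : 0 ≤ x) (hζ : 0 < ζ) (d : ℕ) :
    x ^ d * exp (-(d * log x + log (1 / ζ))) ≤ ζ := by
  rw [neg_add, exp_add, one_div, log_inv, neg_neg, exp_log hζ]
  rcases hx.eq_or_lt with rfl | hx
  · cases d <;> simp [hζ.le]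
  · rw [← log_pow, exp_neg, exp_log (pow_pos hx d), mul_inv_cancel_left₀ (pow_pos hx d).ne']

theorem exponential_mechanism_utility_general
    (d N : ℕ) (hN : 0 < N)
    (C : Set (EuclideanSpace ℝ (Fin d))) (hCmeas : MeasurableSet C)
    (H L w R ε ζ k : ℝ)
    (u : Fin N → EuclideanSpace ℝ (Fin d) → ℝ)
    (hmeas : ∀ i, Measurable (u i))
    (hrange : ∀ i, ∀ ρ ∈ C, u i ρ ∈ Set.Icc 0 H)
    (P : Fin N → Set (Set (EuclideanSpace ℝ (Fin d))))
    (hpart : ∀ i, ⋃₀ P i = C)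
    (hlip : ∀ i, ∀ A ∈ P i, LipschitzOnWith (Real.toNNReal L) (u i) A)
    (ρstar : EuclideanSpace ℝ (Fin d))
    (hball : closedBall ρstar w ⊆ C)
    (hCR : C ⊆ closedBall (0 : EuclideanSpace ℝ (Fin d)) R)
    (hw : 0 < w) (hH : 0 < H) (hε : 0 < ε) (hζ : 0 < ζ)
    (hL : 0 ≤ L)
    (hdisp : ({i : Fin N | SplitBy (P i) (closedBall ρstar w)}.ncard : ℝ) ≤ k) :
    (∫ ρ in {ρ ∈ C | (1 / N : ℝ) * ∑ i, u i ρ <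
        (1 / N : ℝ) * ∑ i, u i ρstar -
          ((2 * H) / (N * ε) * (d * Real.log (R / w) + Real.log (1 / ζ))
            + L * w + H * k / N)},
        Real.exp ((ε * N) / (2 * H) * ((1 / N : ℝ) * ∑ i, u i ρ))) /
      (∫ ρ in C, Real.exp ((ε * N) / (2 * H) * ((1 / N : ℝ) * ∑ i, u i ρ))) ≤ ζ := by
  set g := fun ρ => (1 / N : ℝ) * ∑ i, u i ρ
  have hNpos : (0 : ℝ) < N := Nat.cast_pos.mpr hN
  have hR : 0 ≤ R :=
    (norm_nonneg _).trans (mem_closedBall_zero_iff.mp (hCR (hball (mem_closedBall_self hw.le))))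
  have hlow : ∀ ρ ∈ closedBall ρstar w, g ρstar - (L * w + H * k / N) ≤ g ρ := by
    intro ρ hρ
    have hsum := sum_le_sum_add_of_ncard_splitBy_le hH.le hrange hpart hlip hball hdisp hρ
    rw [Real.coe_toNNReal L hL, Fintype.card_fin] at hsum
    simp only [g]
    field_simp
    linarith
  have hgC : ∀ ρ ∈ C, g ρ ≤ (1 / N : ℝ) * ∑ _i : Fin N, H := fun ρ hρ =>
    mul_le_mul_of_nonneg_left (Finset.sum_le_sum fun i _ => (hrange i ρ hρ).2) (by positivity)
  have hμC : volume C ≠ ⊤ := (measure_mono hCR).trans_lt measure_closedBall_lt_top |>.ne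
  have hint : IntegrableOn (fun ρ => exp ((ε * N) / (2 * H) * g ρ)) C :=
    integrableOn_exp_mul_of_le (by positivity)
      ((Finset.measurable_sum _ fun i _ => hmeas i).const_mul _) hCmeas hμC hgC
  refine (setIntegral_exp_div_setIntegral_exp_le (by positivity) hint measurableSet_closedBall
    hball (measure_closedBall_pos _ _ hw) measure_closedBall_lt_top.ne
    ((measure_mono (Set.sep_subset _ _)).trans_lt hμC.lt_top).ne (fun ρ hρ => hρ.2.le)
    hlow).trans ?_
  calc _ ≤ (R / w) ^ d * exp (-(d * log (R / w) + log (1 / ζ))) := by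
        gcongr
        · simpa using
            measureReal_div_measureReal_closedBall_le volume hw hR ((Set.sep_subset _ _).trans hCR)
        · apply le_of_eq
          simp only [g]
          field_simp
          ring
    _ ≤ ζ := pow_mul_exp_neg_mul_log_add_log_le (div_nonneg hR hw.le) hζ d

/-- Utility guarantee of the exponential mechanism under (w,k)-dispersion: with
probability at least 1-ζ over ρ̂ drawn with density proportional to
exp((εN/2H)·(1/N)Σᵢ uᵢ), the average utility of ρ̂ is within
(2H/(Nε))(d·ln(R/w)+ln(1/ζ)) + Lw + Hk/N of the optimum. -/
theorem exponential_mechanism_utility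
    (d N : ℕ) (hN : 0 < N)
    (C : Set (EuclideanSpace ℝ (Fin d))) (hCmeas : MeasurableSet C)
    (H L w R ε ζ k : ℝ)
    (u : Fin N → EuclideanSpace ℝ (Fin d) → ℝ)
    (hmeas : ∀ i, Measurable (u i))
    (hrange : ∀ i, ∀ ρ ∈ C, u i ρ ∈ Set.Icc 0 H)
    (P : Fin N → Set (Set (EuclideanSpace ℝ (Fin d))))
    (hpart : ∀ i, ⋃₀ P i = C)
    (hdisj : ∀ i, (P i).Pairwise Disjoint)
    (hlip : ∀ i, ∀ A ∈ P i, LipschitzOnWith (Real.toNNReal L) (u i) A)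
    (ρstar : EuclideanSpace ℝ (Fin d))
    (hmax : ∀ ρ ∈ C, ∑ i, u i ρ ≤ ∑ i, u i ρstar)
    (hball : closedBall ρstar w ⊆ C)
    (hCR : C ⊆ closedBall (0 : EuclideanSpace ℝ (Fin d)) R)
    (hw : 0 < w) (hH : 0 < H) (hε : 0 < ε) (hζ : 0 < ζ)
    (hL : 0 ≤ L) (hk : 0 ≤ k)
    (hdisp : ({i : Fin N | SplitBy (P i) (closedBall ρstar w)}.ncard : ℝ) ≤ k) :
    (∫ ρ in {ρ ∈ C | (1 / N : ℝ) * ∑ i, u i ρ <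
        (1 / N : ℝ) * ∑ i, u i ρstar -
          ((2 * H) / (N * ε) * (d * Real.log (R / w) + Real.log (1 / ζ))
            + L * w + H * k / N)},
        Real.exp ((ε * N) / (2 * H) * ((1 / N : ℝ) * ∑ i, u i ρ))) /
      (∫ ρ in C, Real.exp ((ε * N) / (2 * H) * ((1 / N : ℝ) * ∑ i, u i ρ))) ≤ ζ :=
  exponential_mechanism_utility_general d N hN C hCmeas H L w R ε ζ k u hmeas hrange P hpart hlip
    ρstar hball hCR hw hH hε hζ hL hdisp
end
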